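/- arXiv:cs/0411007 — 3 statements merged into one kernel-verified Lean document; each statement's English description precedes it below -/
import Mathlib

section
/- The space of one-dimensional sandpile configurations equipped with the sandpile metric d is a complete metric space: every Cauchy sequence of configurations converges to a configuration. -/
/-- The extended integers `ℤ ∪ {-∞, +∞}`. -/
abbrev EZ : Type := WithBot (WithTop ℤ)

/-- Embedding of `ℤ` into the extended integers. -/
def finVal (n : ℤ) : EZ := ((n : WithTop ℤ) : EZ)

/-- The integer value of a finite extended integer (`0` on `±∞`). -/
def valZ (x : EZ) : ℤ := WithBot.recBotCoe 0 (fun y => WithTop.recTopCoe 0 id y) x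

/-- The measuring device `β_l^m`. -/
noncomputable def beta (l : ℕ) (m : ℤ) (n : EZ) : EZ :=
  if finVal (m + (l : ℤ)) < n then ⊤
  else if n < finVal (m - (l : ℤ)) then ⊥
  else WithBot.map (WithTop.map (fun k => k - m)) n

/-- Reference height: the value of `x` if finite, `0` if `x = ±∞`. -/
def refH (x : EZ) : ℤ := if x = ⊥ ∨ x = ⊤ then 0 else valZ x

/-- One-dimensional sandpile configurations. -/
abbrev Config : Type := ℤ → EZ

/-- The neighborhood sequence `d_r^i(c)`: the `2r`-tuple of measured differences. -/
noncomputable def nbhd (r : ℕ) (c : Config) (i : ℤ) : Fin (2 * r) → EZ :=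
  fun j => beta r (refH (c i))
    (c (i + (if (j : ℕ) < r then ((j : ℕ) : ℤ) - (r : ℤ) else ((j : ℕ) : ℤ) - (r : ℤ) + 1)))

/-- The global function of the sand automaton of radius `r` with local rule `lam`. -/
noncomputable def globalF (r : ℕ) (lam : (Fin (2 * r) → EZ) → ℤ) (c : Config) : Config :=
  fun i => if c i = ⊥ ∨ c i = ⊤ then c i
    else finVal (valZ (c i) + lam (nbhd r c i))

/-- Finite configurations. -/
def FiniteConf (c : Config) : Prop := ∃ k : ℕ, ∀ i : ℤ, (k : ℤ) ≤ |i| → c i = finVal 0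

/-- Periodic configurations. -/
def PeriodicConf (c : Config) : Prop := ∃ p : ℤ, p ≠ 0 ∧ ∀ i : ℤ, c (i + p) = c i


/-- An encoding of the tuple `d_l^0(x)` as a function on `ℤ` (positions outside the
measured window are sent to the default value `⊥`, and for `l = 0` every position
carries the single entry `x 0`); two configurations `x, y` satisfy
`d_l^0(x) = d_l^0(y)` exactly when `dAt l x = dAt l y`. -/
noncomputable def dAt (l : ℕ) (x : Config) : ℤ → EZ :=
  fun j =>
    if l = 0 then x 0
    else if j ≠ 0 ∧ |j| ≤ (l : ℤ) then beta l (refH (x 0)) (x j) else ⊥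

open Classical in
/-- The sandpile distance: `d(x, y) = 2^{-l}` where `l` is the smallest integer with
`d_l^0(x) ≠ d_l^0(y)`, and `d(x, y) = 0` if `x = y`. -/
noncomputable def sdist (x y : Config) : ℝ :=
  if x = y then 0 else (2 : ℝ)⁻¹ ^ sInf {l : ℕ | dAt l x ≠ dAt l y}

/-! A distance below `2⁻¹ ^ L` means exactly that `d_l^0` agrees for every `l ≤ L`, so along a
Cauchy sequence each `d_l^0(u n)` is eventually constant. The centre column is then eventually
constant, with height `m` say, and for each other column `j` the readings `β_l^m(u n j)` are
eventually constant for every large `l`. If one of these readings is finite, the column itself is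
eventually a fixed integer; otherwise, for each large `l` the column eventually stays above
`m + l` or below `m - l`, and according as the first alternative holds for all large `l` or not,
the column tends to `+∞` or to `−∞`. -/

open Filter

lemma finVal_lt_finVal {a b : ℤ} : finVal a < finVal b ↔ a < b := by
  simp [finVal]

lemma finVal_le_finVal {a b : ℤ} : finVal a ≤ finVal b ↔ a ≤ b := by
  simp [finVal]

lemma finVal_inj {a b : ℤ} : finVal a = finVal b ↔ a = b := by
  simp [finVal]

lemma bot_lt_finVal (a : ℤ) : ⊥ < finVal a := WithBot.bot_lt_coe _

lemma finVal_lt_top (a : ℤ) : finVal a < ⊤ := WithBot.coe_lt_coe.2 (WithTop.coe_lt_top a)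

lemma eq_bot_or_eq_top_or_exists_eq_finVal (x : EZ) : x = ⊥ ∨ x = ⊤ ∨ ∃ k, x = finVal k := by
  induction x using WithBot.recBotCoe with
  | bot => exact Or.inl rfl
  | coe y => induction y using WithTop.recTopCoe with
    | top => exact Or.inr (Or.inl rfl)
    | coe k => exact Or.inr (Or.inr ⟨k, rfl⟩)

section Beta

variable {l : ℕ} {m : ℤ}

lemma beta_bot : beta l m ⊥ = ⊥ := by
  simp [beta, finVal]

lemma beta_top : beta l m ⊤ = ⊤ := by
  simp [beta, finVal_lt_top]

lemma beta_finVal (k : ℤ) :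
    beta l m (finVal k) = if m + l < k then ⊤ else if k < m - l then ⊥ else finVal (k - m) := by
  simp only [beta, finVal_lt_finVal]
  rfl

lemma beta_finVal_of_abs_le {k : ℤ} (h : |k - m| ≤ l) : beta l m (finVal k) = finVal (k - m) := by
  have := abs_le.1 h
  rw [beta_finVal, if_neg (by omega), if_neg (by omega)]

lemma beta_eq_top_iff {a : EZ} : beta l m a = ⊤ ↔ finVal (m + l) < a := by
  rcases eq_bot_or_eq_top_or_exists_eq_finVal a with rfl | rfl | ⟨k, rfl⟩
  · simp [beta_bot]
  · simp [beta_top, finVal_lt_top]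
  · rw [beta_finVal, finVal_lt_finVal]
    split_ifs <;> simp_all [finVal]

lemma beta_eq_bot_iff {a : EZ} : beta l m a = ⊥ ↔ a < finVal (m - l) := by
  rcases eq_bot_or_eq_top_or_exists_eq_finVal a with rfl | rfl | ⟨k, rfl⟩
  · simp [beta_bot, finVal]
  · simp [beta_top]
  · rw [beta_finVal, finVal_lt_finVal]
    split_ifs <;> simp [finVal] <;> omega

lemma eq_finVal_of_beta_eq_finVal {a : EZ} {k : ℤ} (h : beta l m a = finVal k) :
    a = finVal (k + m) := by
  rcases eq_bot_or_eq_top_or_exists_eq_finVal a with rfl | rfl | ⟨j, rfl⟩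
  · simp [beta_bot, finVal] at h
  · simp [beta_top, finVal] at h
  · rw [beta_finVal] at h
    split_ifs at h
    · exact absurd h.symm (finVal_lt_top k).ne
    · exact absurd h.symm (bot_lt_finVal k).ne'
    · rw [finVal_inj] at h ⊢
      omega

lemma beta_of_forall_ne_finVal {a : EZ} (h : ∀ k, a ≠ finVal k) : beta l m a = a := by
  rcases eq_bot_or_eq_top_or_exists_eq_finVal a with rfl | rfl | ⟨k, rfl⟩
  · exact beta_bot
  · exact beta_top
  · exact absurd rfl (h k)

lemma finVal_eq_of_eventually_beta_eq {a : EZ} {k : ℤ}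
    (h : ∀ᶠ l in atTop, beta l m (finVal k) = beta l m a) : finVal k = a := by
  obtain ⟨l, hl, hkl⟩ := (h.and (eventually_ge_atTop (k - m).natAbs)).exists
  rw [beta_finVal_of_abs_le (by rw [Int.abs_eq_natAbs]; exact_mod_cast hkl)] at hl
  rw [eq_finVal_of_beta_eq_finVal hl.symm, sub_add_cancel]

lemma eq_of_eventually_beta_eq {a b : EZ} (h : ∀ᶠ l in atTop, beta l m a = beta l m b) :
    a = b := by
  by_cases ha : ∃ k, a = finVal k
  · obtain ⟨k, rfl⟩ := ha
    exact finVal_eq_of_eventually_beta_eq h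
  by_cases hb : ∃ k, b = finVal k
  · obtain ⟨k, rfl⟩ := hb
    exact (finVal_eq_of_eventually_beta_eq (h.mono fun _ => Eq.symm)).symm
  push Not at ha hb
  obtain ⟨l, hl⟩ := h.exists
  rwa [beta_of_forall_ne_finVal ha, beta_of_forall_ne_finVal hb] at hl

end Beta

section Limits

variable {ι : Type*} {f : Filter ι} {m : ℤ} {x : ι → EZ}

lemma eventually_finVal_or_gt_or_lt_of_eventually_beta_eq {l : ℕ} {b : EZ}
    (h : ∀ᶠ i in f, beta l m (x i) = b) :
    (∃ k, ∀ᶠ i in f, x i = finVal k) ∨ (∀ᶠ i in f, finVal (m + l) < x i) ∨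
      ∀ᶠ i in f, x i < finVal (m - l) := by
  rcases eq_bot_or_eq_top_or_exists_eq_finVal b with rfl | rfl | ⟨k, rfl⟩
  · exact .inr (.inr (h.mono fun _ => beta_eq_bot_iff.1))
  · exact .inr (.inl (h.mono fun _ => beta_eq_top_iff.1))
  · exact .inl ⟨k + m, h.mono fun _ => eq_finVal_of_beta_eq_finVal⟩

theorem exists_forall_eventually_beta_eq
    (h : ∀ᶠ l in atTop, ∃ b, ∀ᶠ i in f, beta l m (x i) = b) :
    ∃ v, ∀ l, ∀ᶠ i in f, beta l m (x i) = beta l m v := by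
  by_cases hconst : ∃ k, ∀ᶠ i in f, x i = finVal k
  · obtain ⟨k, hk⟩ := hconst
    exact ⟨finVal k, fun l => hk.mono fun i hi => by rw [hi]⟩
  have hinf : ∀ᶠ l : ℕ in atTop,
      (∀ᶠ i in f, finVal (m + l) < x i) ∨ ∀ᶠ i in f, x i < finVal (m - l) :=
    h.mono fun l ⟨_, hb⟩ =>
      (eventually_finVal_or_gt_or_lt_of_eventually_beta_eq hb).resolve_left hconst
  by_cases htop : ∀ᶠ l : ℕ in atTop, ∀ᶠ i in f, finVal (m + l) < x i
  · refine ⟨⊤, fun l => ?_⟩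
    obtain ⟨l', hl', hll'⟩ := (htop.and (eventually_ge_atTop l)).exists
    refine hl'.mono fun i hi => ?_
    rw [beta_top, beta_eq_top_iff]
    exact (finVal_le_finVal.2 (by omega)).trans_lt hi
  · have hbot : ∃ᶠ l : ℕ in atTop, ∀ᶠ i in f, x i < finVal (m - l) :=
      (not_eventually.1 htop).mp (hinf.mono fun _ hl hnot => hl.resolve_left hnot)
    refine ⟨⊥, fun l => ?_⟩
    obtain ⟨l', hl', hll'⟩ := (hbot.and_eventually (eventually_ge_atTop l)).exists
    refine hl'.mono fun i hi => ?_
    rw [beta_bot, beta_eq_bot_iff]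
    exact hi.trans_le (finVal_le_finVal.2 (by omega))

end Limits

lemma eventually_dAt_apply {j : ℤ} (hj : j ≠ 0) :
    ∀ᶠ l in atTop, ∀ x : Config, dAt l x j = beta l (refH (x 0)) (x j) := by
  refine (eventually_ge_atTop j.natAbs).mono fun l hl x => ?_
  have hl0 : l ≠ 0 := (Int.natAbs_pos.2 hj).trans_le hl |>.ne'
  have hjl : |j| ≤ l := by rw [Int.abs_eq_natAbs]; exact_mod_cast hl
  simp [dAt, hl0, hj, hjl]

lemma dAt_apply_eq_of_beta_eq {l : ℕ} {x y : Config} {j : ℤ} (h0 : x 0 = y 0)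
    (hj : beta l (refH (y 0)) (x j) = beta l (refH (y 0)) (y j)) : dAt l x j = dAt l y j := by
  simp only [dAt, h0, hj]

lemma eq_of_forall_dAt_eq {x y : Config} (h : ∀ l, dAt l x = dAt l y) : x = y := by
  have h0 : x 0 = y 0 := congrFun (h 0) 0
  funext j
  rcases eq_or_ne j 0 with rfl | hj
  · exact h0
  refine eq_of_eventually_beta_eq (m := refH (x 0)) ((eventually_dAt_apply hj).mono fun l hl => ?_)
  rw [← hl, h l, hl, h0]

lemma sdist_lt_two_inv_pow_iff {x y : Config} {L : ℕ} :
    sdist x y < 2⁻¹ ^ L ↔ ∀ l ≤ L, dAt l x = dAt l y := by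
  unfold sdist
  split_ifs with hxy
  · simp [hxy]
  · have hne : {l | dAt l x ≠ dAt l y}.Nonempty := by
      by_contra hempty
      exact hxy (eq_of_forall_dAt_eq fun l => not_not.1 fun hl => hempty ⟨l, hl⟩)
    rw [pow_lt_pow_iff_right_of_lt_one₀ (by norm_num) (by norm_num)]
    constructor
    · intro hL l hl
      by_contra hdiff
      have := Nat.sInf_le (show l ∈ {l | dAt l x ≠ dAt l y} from hdiff)
      omega
    · intro hagree
      by_contra! hle
      exact Nat.sInf_mem hne (hagree _ hle)

theorem exists_forall_eventually_dAt_eq {ι : Type*} {f : Filter ι} [f.NeBot] {u : ι → Config}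
    (h : ∀ l, ∃ a, ∀ᶠ i in f, dAt l (u i) = a) :
    ∃ c : Config, ∀ l, ∀ᶠ i in f, dAt l (u i) = dAt l c := by
  choose a ha using h
  set x₀ := a 0 0
  have h0 : ∀ᶠ i in f, u i 0 = x₀ := (ha 0).mono fun i hi => congrFun hi 0
  have hβ : ∀ j, ∀ᶠ l in atTop, ∃ b, ∀ᶠ i in f, beta l (refH x₀) (u i j) = b := by
    intro j
    rcases eq_or_ne j 0 with rfl | hj
    · exact .of_forall fun l => ⟨_, h0.mono fun i hi => congrArg (beta l _) hi⟩
    · refine (eventually_dAt_apply hj).mono fun l hl => ⟨a l j, ((ha l).and h0).mono ?_⟩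
      rintro i ⟨hi, hi0⟩
      rw [← hi0, ← hl, hi]
  choose c hc using fun j => exists_forall_eventually_beta_eq (hβ j)
  have hc0 : c 0 = x₀ := by
    refine (eq_of_eventually_beta_eq (m := refH x₀) (.of_forall fun l => ?_)).symm
    obtain ⟨i, hi, hi0⟩ := ((hc 0 l).and h0).exists
    rwa [hi0] at hi
  refine ⟨c, fun l => ?_⟩
  suffices hl : a l = dAt l c from (ha l).mono fun i hi => hi.trans hl
  funext j
  obtain ⟨i, hi, hi0, hij⟩ := ((ha l).and (h0.and (hc j l))).exists
  rw [← congrFun hi j, dAt_apply_eq_of_beta_eq (hi0.trans hc0.symm) (by rwa [hc0])]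

/-- The space of one-dimensional sandpile configurations with the sandpile metric is
complete: every Cauchy sequence of configurations converges to a configuration. -/
theorem config_space_complete (u : ℕ → Config)
    (hCauchy : ∀ ε : ℝ, 0 < ε →
      ∃ N : ℕ, ∀ m n : ℕ, N ≤ m → N ≤ n → sdist (u m) (u n) < ε) :
    ∃ c : Config, ∀ ε : ℝ, 0 < ε → ∃ N : ℕ, ∀ n : ℕ, N ≤ n → sdist (u n) c < ε := by
  have hstable : ∀ l, ∃ a, ∀ᶠ n in atTop, dAt l (u n) = a := fun l => by
    obtain ⟨N, hN⟩ := hCauchy _ (pow_pos (by norm_num : (0 : ℝ) < 2⁻¹) l)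
    exact ⟨dAt l (u N), eventually_atTop.2
      ⟨N, fun n hn => sdist_lt_two_inv_pow_iff.1 (hN n N hn le_rfl) l le_rfl⟩⟩
  obtain ⟨c, hc⟩ := exists_forall_eventually_dAt_eq hstable
  refine ⟨c, fun ε hε => ?_⟩
  obtain ⟨L, hL⟩ := exists_pow_lt_of_lt_one hε (by norm_num : (2 : ℝ)⁻¹ < 1)
  obtain ⟨N, hN⟩ := eventually_atTop.1 <|
    (Set.finite_Iic L).eventually_all.2 fun l (_ : l ≤ L) => hc l
  exact ⟨N, fun n hn => (sdist_lt_two_inv_pow_iff.2 (hN n hn)).trans hL⟩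
end

section
/- If c_i > c'_i at some position i for two configurations c, c' with f_Y(c) = f_Y(c'), then c_{i−2} > c'_{i−2} and c_{i−2} = c_i − 1; consequently any two distinct configurations with the same image under f_Y differ at infinitely many positions and take infinitely many different values at those positions. -/
/-- The local rule of the sand automaton `Y` (radius 2, arguments `(a,b,x,y)`):
returns `-1` on `(+∞,-,-,-)`, `(2,-,-,-)`, `(1,-,-,-)`, `(0,-,-,-)`, `(-1,-∞,-,-)`,
and `0` otherwise. -/
def lamY (v : Fin 4 → EZ) : ℤ :=
  if v 0 = ⊤ ∨ v 0 = finVal 2 ∨ v 0 = finVal 1 ∨ v 0 = finVal 0 then -1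
  else if v 0 = finVal (-1) ∧ v 1 = ⊥ then -1
  else 0

/-!
On integer-valued configurations `Y` lowers the height at `i` by one exactly when
`c (i-2) ≥ c i`, or `c (i-2) = c i - 1` and `c (i-1) < c i - 2` (`yDrop`), and leaves it unchanged
otherwise. So if `f_Y c = f_Y c'` and `c' i < c i`, then `c i = c' i + 1` and a grain falls at `i`
in `c` but not in `c'`, whence `c (i-2) ≥ c i - 1 = c' i > c' (i-2)`; the same argument at `i - 2`
gives `c (i-2) = c' (i-2) + 1 ≤ c i - 1`. Iterating along `i, i-2, i-4, …`, both configurations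
descend by one per step and stay one apart, which produces infinitely many differences and
infinitely many heights.
-/

@[simp] lemma finVal_inj_s13 {m n : ℤ} : finVal m = finVal n ↔ m = n := by simp [finVal]
@[simp] lemma finVal_lt_finVal_s13 {m n : ℤ} : finVal m < finVal n ↔ m < n := by simp [finVal]
@[simp] lemma finVal_ne_top (n : ℤ) : finVal n ≠ ⊤ := by simp [finVal]
@[simp] lemma finVal_ne_bot (n : ℤ) : finVal n ≠ ⊥ := by simp [finVal]
@[simp] lemma top_ne_finVal (n : ℤ) : ⊤ ≠ finVal n := (finVal_ne_top n).symm
@[simp] lemma bot_ne_finVal (n : ℤ) : ⊥ ≠ finVal n := (finVal_ne_bot n).symm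
@[simp] lemma valZ_finVal (n : ℤ) : valZ (finVal n) = n := by simp [valZ, finVal]
@[simp] lemma refH_finVal (n : ℤ) : refH (finVal n) = n := by simp [refH]

lemma finVal_injective : Function.Injective finVal := fun _ _ ↦ finVal_inj_s13.mp

lemma beta_two_finVal (m n : ℤ) : beta 2 m (finVal n) =
    if m + 2 < n then ⊤ else if n < m - 2 then ⊥ else finVal (n - m) := by
  simp only [beta, Nat.cast_ofNat, finVal_lt_finVal_s13]
  congr 2

lemma nbhd_two_zero (c : Config) (i : ℤ) :
    nbhd 2 c i 0 = beta 2 (refH (c i)) (c (i - 2)) := by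
  simp [nbhd, sub_eq_add_neg]

lemma nbhd_two_one (c : Config) (i : ℤ) :
    nbhd 2 c i 1 = beta 2 (refH (c i)) (c (i - 1)) := by
  simp [nbhd, sub_eq_add_neg]

def yDrop (u : ℤ → ℤ) (i : ℤ) : ℤ :=
  if u i ≤ u (i - 2) ∨ (u (i - 2) = u i - 1 ∧ u (i - 1) < u i - 2) then 1 else 0

def yStep (u : ℤ → ℤ) (i : ℤ) : ℤ := u i - yDrop u i

lemma lamY_nbhd_finVal (u : ℤ → ℤ) (i : ℤ) :
    lamY (nbhd 2 (fun j ↦ finVal (u j)) i) = -yDrop u i := by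
  simp only [lamY, nbhd_two_zero, nbhd_two_one, refH_finVal, beta_two_finVal, yDrop]
  split_ifs <;> simp_all <;> omega

lemma globalF_lamY_finVal (u : ℤ → ℤ) :
    globalF 2 lamY (fun j ↦ finVal (u j)) = fun i ↦ finVal (yStep u i) := by
  ext1 i
  simp [globalF, lamY_nbhd_finVal, yStep, sub_eq_add_neg]

section
variable {u u' : ℤ → ℤ} {i : ℤ}

lemma sub_one_le_of_yDrop_eq_one (hu : yDrop u i = 1) : u i - 1 ≤ u (i - 2) := by
  unfold yDrop at hu
  split_ifs at hu <;> omega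

lemma lt_of_yDrop_eq_zero (hu : yDrop u i = 0) : u (i - 2) < u i := by
  unfold yDrop at hu
  split_ifs at hu <;> omega

lemma yDrop_of_yStep_eq (h : yStep u = yStep u') (hi : u' i < u i) :
    u i = u' i + 1 ∧ yDrop u i = 1 ∧ yDrop u' i = 0 := by
  have := congrFun h i
  simp only [yStep, yDrop] at this ⊢
  split_ifs at this ⊢ <;> omega

lemma lt_sub_two_of_yStep_eq (h : yStep u = yStep u') (hi : u' i < u i) :
    u' (i - 2) < u (i - 2) ∧ u (i - 2) = u i - 1 := by
  obtain ⟨hsucc, hdrop, hdrop'⟩ := yDrop_of_yStep_eq h hi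
  have hle := sub_one_le_of_yDrop_eq_one hdrop
  have hlt' := lt_of_yDrop_eq_zero hdrop'
  have hlt : u' (i - 2) < u (i - 2) := by omega
  have hsucc₂ := (yDrop_of_yStep_eq h hlt).1
  exact ⟨hlt, by omega⟩

lemma yStep_eq_descent (h : yStep u = yStep u') (hi : u' i < u i) (k : ℕ) :
    u (i - 2 * k) = u i - k ∧ u' (i - 2 * k) = u i - k - 1 := by
  induction k with
  | zero =>
    have := (yDrop_of_yStep_eq h hi).1
    simp only [Nat.cast_zero, mul_zero, sub_zero, true_and]
    omega
  | succ k ih =>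
    have hk := lt_sub_two_of_yStep_eq h (i := i - 2 * k) (by omega)
    have hk' := (yDrop_of_yStep_eq h hk.1).1
    rw [show i - 2 * ((k + 1 : ℕ) : ℤ) = i - 2 * k - 2 by push_cast; ring]
    omega

lemma infinite_image_ne_of_yStep_eq (h : yStep u = yStep u') (hi : u' i < u i) :
    (u '' {j | u j ≠ u' j}).Infinite ∧ (u' '' {j | u j ≠ u' j}).Infinite := by
  have hmem : ∀ k : ℕ, i - 2 * k ∈ {j | u j ≠ u' j} := fun k ↦ by
    have := yStep_eq_descent h hi k
    show u _ ≠ u' _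
    omega
  constructor
  · exact Set.infinite_of_injective_forall_mem (f := fun k : ℕ ↦ u i - k)
      (fun a b hab ↦ by simpa using hab) (fun k ↦ ⟨_, hmem k, (yStep_eq_descent h hi k).1⟩)
  · exact Set.infinite_of_injective_forall_mem (f := fun k : ℕ ↦ u i - k - 1)
      (fun a b hab ↦ by simpa using hab) (fun k ↦ ⟨_, hmem k, (yStep_eq_descent h hi k).2⟩)

end

/-- If `c` and `c'` are configurations with only finite (integer) values and
`f_Y(c) = f_Y(c')`, then whenever `c_i > c'_i` one has `c_{i-2} > c'_{i-2}` and
`c_{i-2} = c_i - 1`; consequently, if `c ≠ c'` then `c` and `c'` differ at infinitely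
many positions, and `c` takes infinitely many different values at those positions. -/
theorem Y_difference_propagation (c c' : Config)
    (hfin : ∀ i : ℤ, ∃ n : ℤ, c i = finVal n)
    (hfin' : ∀ i : ℤ, ∃ n : ℤ, c' i = finVal n)
    (himg : globalF 2 lamY c = globalF 2 lamY c') :
    (∀ i : ℤ, c' i < c i →
      c' (i - 2) < c (i - 2) ∧ c (i - 2) = finVal (valZ (c i) - 1)) ∧
    (c ≠ c' →
      {i : ℤ | c i ≠ c' i}.Infinite ∧ (c '' {i : ℤ | c i ≠ c' i}).Infinite) := by
  choose u hu using hfin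
  choose u' hu' using hfin'
  obtain rfl : c = fun i ↦ finVal (u i) := funext hu
  obtain rfl : c' = fun i ↦ finVal (u' i) := funext hu'
  have h : yStep u = yStep u' := by
    ext i
    simpa [globalF_lamY_finVal] using congrFun himg i
  have hD : {i | finVal (u i) ≠ finVal (u' i)} = {i | u i ≠ u' i} := by simp
  refine ⟨fun i hi ↦ by simpa using lt_sub_two_of_yStep_eq h (by simpa using hi), fun hne ↦ ?_⟩
  obtain ⟨i, hi⟩ := Function.ne_iff.mp hne
  have hinf : (u '' {i | u i ≠ u' i}).Infinite := by
    rcases lt_or_gt_of_ne (by simpa using hi : u i ≠ u' i) with hlt | hgt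
    · simpa [ne_comm] using (infinite_image_ne_of_yStep_eq h.symm hlt).2
    · exact (infinite_image_ne_of_yStep_eq h hgt).1
  rw [hD]
  exact ⟨hinf.of_image _, by simpa only [Set.image_image] using hinf.image finVal_injective.injOn⟩
end

section
/- For every d-dimensional sand automaton, P-injectivity implies F-injectivity: if the global function f is injective on periodic configurations, then f is injective on finite configurations. -/
/-- `d`-dimensional sandpile configurations. -/
def ConfigD (d : ℕ) : Type := (Fin d → ℤ) → EZ

/-- The index set of a `d`-dimensional neighborhood of radius `r`: the nonzero
vectors `v ∈ [-r, r]^d`. -/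
def NIdx (d r : ℕ) : Type := {v : Fin d → ℤ // (∀ j, |v j| ≤ (r : ℤ)) ∧ v ≠ 0}

/-- The neighborhood tuple `d_r^i(c) = (β_r^{c_i}(c_{i+v}))_{v ∈ [-r,r]^d, v ≠ 0}`
(with reference height `0` when `c_i = ±∞`). -/
noncomputable def nbhdD (d r : ℕ) (c : ConfigD d) (i : Fin d → ℤ) : NIdx d r → EZ :=
  fun v => beta r (refH (c i)) (c (fun t => i t + v.1 t))

/-- The global function of the `d`-dimensional sand automaton of radius `r`
with local rule `lam`. -/
noncomputable def globalD (d r : ℕ) (lam : (NIdx d r → EZ) → ℤ) (c : ConfigD d) : ConfigD d :=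
  fun i => if c i = ⊥ ∨ c i = ⊤ then c i
    else finVal (valZ (c i) + lam (nbhdD d r c i))

/-- Finite `d`-dimensional configurations: `c_i = 0` whenever the infinity norm
`|i| = max_j |i_j|` is at least some `k`. -/
def FiniteD {d : ℕ} (c : ConfigD d) : Prop :=
  ∃ k : ℕ, ∀ i : Fin d → ℤ, (∃ j, (k : ℤ) ≤ |i j|) → c i = finVal 0

/-- Periodic `d`-dimensional configurations: invariant under translation by `p · e_j`
for some integer `p ≥ 1` and every standard basis vector `e_j`. -/
def PeriodicD {d : ℕ} (c : ConfigD d) : Prop :=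
  ∃ p : ℤ, 1 ≤ p ∧ ∀ (i : Fin d → ℤ) (j : Fin d),
    c (fun t => i t + if t = j then p else 0) = c i

/-!
A finite configuration vanishing outside the box `(-k, k)^d` is periodized with period `2n`,
`n ≥ k + r`. Consecutive copies are then separated by a band of zeros at least `r` wide, so every
radius-`r` neighbourhood of the periodized configuration is a neighbourhood of the original one:
the global function commutes with periodization. `P`-injectivity identifies the two periodized
configurations, and a finite configuration is recovered from its periodization on the box.
-/

namespace SandAutomaton

section Locality

variable {d r : ℕ} (lam : (NIdx d r → EZ) → ℤ)

theorem globalD_apply_eq_of_local_eq {c c' : ConfigD d} {i j : Fin d → ℤ} (hij : c i = c' j)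
    (hv : ∀ v : NIdx d r, c (i + v.1) = c' (j + v.1)) :
    globalD d r lam c i = globalD d r lam c' j := by
  have hnbhd : nbhdD d r c i = nbhdD d r c' j :=
    funext fun v => by simp only [nbhdD, hij]; exact congrArg _ (hv v)
  simp only [globalD, hij, hnbhd]

end Locality

section Wrapping

theorem bmod_two_mul_of_abs_lt {n : ℕ} {x : ℤ} (h : |x| < n) : x.bmod (2 * n) = x := by
  rw [abs_lt] at h
  exact Int.bmod_eq_of_le (by push_cast; omega) (by push_cast; omega)

theorem abs_bmod_two_mul_le {n : ℕ} (hn : 0 < n) (x : ℤ) : |x.bmod (2 * n)| ≤ n := by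
  have hlo := Int.le_bmod (x := x) (m := 2 * n) (by omega)
  have hhi := Int.bmod_lt (x := x) (m := 2 * n) (by omega)
  push_cast at hlo hhi
  rw [abs_le]
  omega

/-- The two sides are congruent modulo `2n`, and the bounds keep their difference below `2n`. -/
theorem bmod_two_mul_add_of_abs_lt {k r n : ℕ} (hn : k + r ≤ n) {x v : ℤ} (hv : |v| ≤ r)
    (h : |(x + v).bmod (2 * n)| < k ∨ |x.bmod (2 * n) + v| < k) :
    (x + v).bmod (2 * n) = x.bmod (2 * n) + v := by
  have hdvd : ((2 * n : ℕ) : ℤ) ∣ (x + v).bmod (2 * n) - (x.bmod (2 * n) + v) := by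
    rw [show (x + v).bmod (2 * n) - (x.bmod (2 * n) + v)
        = ((x + v).bmod (2 * n) - (x + v)) - (x.bmod (2 * n) - x) by ring]
    exact dvd_sub Int.dvd_bmod_sub_self Int.dvd_bmod_sub_self
  have hn₀ : 0 < n := by
    have : (0 : ℤ) < k := by rcases h with h | h <;> exact (abs_nonneg _).trans_lt h
    omega
  have hb := abs_bmod_two_mul_le hn₀ (x + v)
  have ha := abs_bmod_two_mul_le hn₀ x
  rw [← sub_eq_zero]
  refine Int.eq_zero_of_abs_lt_dvd hdvd ?_
  push_cast
  rw [abs_le] at hb ha hv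
  rw [abs_lt]
  rcases h with h | h <;> rw [abs_lt] at h <;> constructor <;> omega

variable {d : ℕ}

/-- Coordinatewise balanced residue modulo `2n`, with values in `[-n, n)^d`. -/
def wrap (n : ℕ) (i : Fin d → ℤ) : Fin d → ℤ := fun t => (i t).bmod (2 * n)

def periodize (n : ℕ) (c : ConfigD d) : ConfigD d := fun i => c (wrap n i)

def VanishesOutside (k : ℕ) (c : ConfigD d) : Prop :=
  ∀ i : Fin d → ℤ, (∃ j, (k : ℤ) ≤ |i j|) → c i = finVal 0

theorem VanishesOutside.mono {k l : ℕ} {c : ConfigD d} (hkl : k ≤ l) (hc : VanishesOutside k c) :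
    VanishesOutside l c := fun i ⟨j, hj⟩ => hc i ⟨j, le_trans (by exact_mod_cast hkl) hj⟩

theorem wrap_eq_self {n : ℕ} {i : Fin d → ℤ} (h : ∀ t, |i t| < n) : wrap n i = i :=
  funext fun t => bmod_two_mul_of_abs_lt (h t)

theorem periodize_periodic {n : ℕ} (hn : 0 < n) (c : ConfigD d) : PeriodicD (periodize n c) := by
  refine ⟨2 * n, by omega, fun i j => congrArg c (funext fun t => ?_)⟩
  by_cases htj : t = j
  · simp only [wrap, htj, if_true]
    simpa using Int.add_mul_bmod_self_right (i j) 1 (2 * n)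
  · simp only [wrap, htj, if_false, add_zero]

theorem apply_wrap_add {k r n : ℕ} (hn : k + r ≤ n) {c : ConfigD d} (hc : VanishesOutside k c)
    (i v : Fin d → ℤ) (hv : ∀ t, |v t| ≤ r) : c (wrap n (i + v)) = c (wrap n i + v) := by
  by_cases h : ∃ t, (k : ℤ) ≤ |wrap n (i + v) t| ∧ (k : ℤ) ≤ |(wrap n i + v) t|
  · obtain ⟨t, hb, ha⟩ := h
    rw [hc _ ⟨t, hb⟩, hc _ ⟨t, ha⟩]
  · push Not at h
    exact congrArg c (funext fun t =>
      bmod_two_mul_add_of_abs_lt hn (hv t) ((lt_or_ge _ _).imp_right (h t)))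

theorem globalD_periodize {k r n : ℕ} (hn : k + r ≤ n) (lam : (NIdx d r → EZ) → ℤ)
    {c : ConfigD d} (hc : VanishesOutside k c) (i : Fin d → ℤ) :
    globalD d r lam (periodize n c) i = globalD d r lam c (wrap n i) :=
  globalD_apply_eq_of_local_eq lam rfl fun v => apply_wrap_add hn hc i v.1 v.2.1

theorem eq_of_periodize_eq {k n : ℕ} (hkn : k ≤ n) {c₁ c₂ : ConfigD d}
    (hc₁ : VanishesOutside k c₁) (hc₂ : VanishesOutside k c₂)
    (h : periodize n c₁ = periodize n c₂) : c₁ = c₂ := by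
  funext i
  by_cases hi : ∃ j, (k : ℤ) ≤ |i j|
  · rw [hc₁ i hi, hc₂ i hi]
  · push Not at hi
    have hwrap : wrap n i = i := wrap_eq_self fun t => (hi t).trans_le (by exact_mod_cast hkn)
    simpa only [periodize, hwrap] using congrFun h i

end Wrapping

end SandAutomaton

open SandAutomaton

theorem P_injective_implies_F_injective_general
    (d r : ℕ)
    (lam : (NIdx d r → EZ) → ℤ)
    (hPinj : Set.InjOn (globalD d r lam) {c : ConfigD d | PeriodicD c}) :
    Set.InjOn (globalD d r lam) {c : ConfigD d | FiniteD c} := by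
  rintro c₁ ⟨k₁, hc₁⟩ c₂ ⟨k₂, hc₂⟩ hf
  set k := max k₁ k₂
  have hc₁' : VanishesOutside k c₁ := VanishesOutside.mono (le_max_left _ _) hc₁
  have hc₂' : VanishesOutside k c₂ := VanishesOutside.mono (le_max_right _ _) hc₂
  have hkrn : k + r ≤ k + r + 1 := Nat.le_succ _
  have hf_periodize :
      globalD d r lam (periodize (k + r + 1) c₁) = globalD d r lam (periodize (k + r + 1) c₂) :=
    funext fun i => by rw [globalD_periodize hkrn lam hc₁', globalD_periodize hkrn lam hc₂', hf]
  exact eq_of_periodize_eq (by omega) hc₁' hc₂' <|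
    hPinj (periodize_periodic (Nat.succ_pos _) c₁) (periodize_periodic (Nat.succ_pos _) c₂)
      hf_periodize

/-- For every `d`-dimensional sand automaton (dimension `d ≥ 1`, radius `r ≥ 1`, local
rule `lam` taking values in `[-r, r]`), `P`-injectivity implies `F`-injectivity: if the
global function is injective on periodic configurations, then it is injective on
finite configurations. -/
theorem P_injective_implies_F_injective
    (d r : ℕ) (hd : 1 ≤ d) (hr : 1 ≤ r)
    (lam : (NIdx d r → EZ) → ℤ)
    (hlam : ∀ v, -(r : ℤ) ≤ lam v ∧ lam v ≤ (r : ℤ))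
    (hPinj : Set.InjOn (globalD d r lam) {c : ConfigD d | PeriodicD c}) :
    Set.InjOn (globalD d r lam) {c : ConfigD d | FiniteD c} :=
  P_injective_implies_F_injective_general d r lam hPinj
end
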